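/- Every finitely presented unary semi-Peano algebra of rank n is isomorphic to a free product F/ω₁ ∐ ⋯ ∐ F/ωₙ of n cyclic algebras, and this decomposition is unique up to reordering the factors and replacing each ωᵢ by a conjugate word. -/

import Mathlib

/-- The action of a word `w ∈ F*` on a unary algebra. -/
def wordAct {F U : Type*} (act : F → U → U) (w : List F) (x : U) : U :=
  w.foldr act x

/-- `wpow ω n` is the word `ωⁿ`. -/
def wpow {F : Type*} (ω : List F) (n : ℕ) : List F :=
  (List.replicate n ω).flatten

/-- One-step relation generating the congruence of `F/ω`: a word `φ` (read as
`φ(a₀)`) is identified with `φω` (read as `φ(ω(a₀))`). -/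
def wstep {F : Type*} (ω : List F) (φ ψ : List F) : Prop :=
  ψ = φ ++ ω

/-- `F/ω`: the free unary algebra on one generator `a₀` modulo the least closed
and balanced congruence identifying `a₀` with `ω(a₀)`. Concretely: words
`φ ∈ F*` (representing `φ(a₀)`) with `φ` identified with `φωⁿ`. -/
def FmodW {F : Type*} (ω : List F) : Type _ :=
  Quot (wstep ω)

/-- The class of the word `φ` in `F/ω`. -/
def FmodW.mk {F : Type*} (ω : List F) (φ : List F) : FmodW ω :=
  Quot.mk _ φ

/-- The canonical generator of `F/ω` (the class of `a₀`, i.e. of the empty word). -/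
def FmodW.gen {F : Type*} (ω : List F) : FmodW ω :=
  FmodW.mk ω []

/-- The unary operation `f` on `F/ω`, acting by prepending the letter `f`. -/
def FmodW.op {F : Type*} (ω : List F) (f : F) : FmodW ω → FmodW ω :=
  Quot.lift (fun φ => FmodW.mk ω (f :: φ))
    (fun φ ψ h => Quot.sound (show f :: ψ = (f :: φ) ++ ω by rw [h]; rfl))

/-- A unary algebra is semi-Peano iff `f(x) = g(y)` implies `f = g` and `x = y`. -/
def IsSemiPeanoUnary {F U : Type*} (act : F → U → U) : Prop :=
  ∀ f g x y, act f x = act g y → f = g ∧ x = y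

/-- A set generates a unary algebra if the only subalgebra containing it is the
whole algebra. -/
def Generates {F U : Type*} (act : F → U → U) (A : Set U) : Prop :=
  ∀ S : Set U, A ⊆ S → (∀ f, ∀ x ∈ S, act f x ∈ S) → S = Set.univ

/-- The free unary algebra over `F` on the generating set `X`: its elements are
pairs `(w, x)` representing `w(x)`, and the operation `f` prepends the letter. -/
def freeAct {F : Type*} (X : Type*) (f : F) : List F × X → List F × X :=
  fun w => (f :: w.1, w.2)

/-- `θ` is a closed and balanced congruence on the unary algebra `(U; act)`. -/
def IsCBCong {F U : Type*} (act : F → U → U) (θ : U → U → Prop) : Prop :=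
  Equivalence θ ∧ (∀ f x y, θ x y → θ (act f x) (act f y)) ∧
    (∀ f x y, θ (act f x) (act f y) → θ x y) ∧
    (∀ f g x y, θ (act f x) (act g y) → f = g)

/-- `boxminus act R`: the least closed and balanced congruence on `(U; act)`
containing the set of relations `R`. -/
def boxminus {F U : Type*} (act : F → U → U) (R : Set (U × U)) : U → U → Prop :=
  fun a b => ∀ θ : U → U → Prop, IsCBCong act θ → (∀ p ∈ R, θ p.1 p.2) → θ a b

/-- A unary algebra is finitely presented (as a semi-Peano algebra) if it is
isomorphic to `Free(X)/⊟(R)` for some finite `X` and finite `R`; equivalently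
there is a surjective homomorphism `π` from the free unary algebra on a finite
`X` whose kernel is exactly `⊟(R)` for a finite `R`. -/
def IsFinPresented {F U : Type*} (act : F → U → U) : Prop :=
  ∃ (X : Type) (_ : Finite X) (R : Set ((List F × X) × (List F × X))) (_ : R.Finite)
    (π : List F × X → U),
    Function.Surjective π ∧ (∀ f w, π (freeAct X f w) = act f (π w)) ∧
    ∀ w w', π w = π w' ↔ boxminus (freeAct X) R w w'

/-- The operations of the free product `F/ω₁ ∐ ⋯ ∐ F/ωₙ` of the cyclic
algebras `F/ωᵢ`, acting componentwise on the disjoint union. -/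
def sigOp {F : Type*} {n : ℕ} (ω : Fin n → List F) (f : F) :
    (Σ i, FmodW (ω i)) → (Σ i, FmodW (ω i)) :=
  fun x => ⟨x.1, FmodW.op (ω x.1) f x.2⟩

theorem wordAct_append {F U : Type*} (act : F → U → U) (u v : List F) (x : U) :
    wordAct act (u ++ v) x = wordAct act u (wordAct act v x) :=
  List.foldr_append ..

theorem wpow_zero {F : Type*} (ω : List F) : wpow ω 0 = [] := rfl
theorem wpow_succ {F : Type*} (ω : List F) (k : ℕ) : wpow ω (k+1) = ω ++ wpow ω k := by
  simp [wpow, List.replicate_succ]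
theorem wpow_add {F : Type*} (ω : List F) (k l : ℕ) : wpow ω (k+l) = wpow ω k ++ wpow ω l := by
  induction k with
  | zero => simp [wpow_zero]
  | succ k ih => rw [Nat.succ_add, wpow_succ, wpow_succ, ih, List.append_assoc]
theorem wpow_one {F : Type*} (ω : List F) : wpow ω 1 = ω := by simp [wpow]
theorem wpow_length {F : Type*} (ω : List F) (k : ℕ) : (wpow ω k).length = k * ω.length := by
  induction k with
  | zero => simp [wpow_zero]
  | succ k ih => rw [wpow_succ]; simp [ih, Nat.succ_mul]; ring
theorem wpow_nil {F : Type*} (k : ℕ) : wpow ([] : List F) k = [] := by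
  have := wpow_length ([] : List F) k
  simpa using List.length_eq_zero_iff.mp (by simpa using this)

theorem wordAct_cons {F U : Type*} (act : F → U → U) (f : F) (w : List F) (x : U) :
    wordAct act (f :: w) x = act f (wordAct act w x) := rfl

theorem strip {F U : Type*} {act : F → U → U} (hSP : IsSemiPeanoUnary act) :
    ∀ (w v : List F) (x y : U), wordAct act w x = wordAct act v y →
      (∃ u, w = v ++ u ∧ wordAct act u x = y) ∨ (∃ u, v = w ++ u ∧ wordAct act u y = x) := by
  intro w
  induction w with
  | nil =>
    intro v x y h
    exact Or.inr ⟨v, rfl, h.symm⟩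
  | cons f w ih =>
    intro v x y h
    cases v with
    | nil => exact Or.inl ⟨f :: w, rfl, h⟩
    | cons g v =>
      rw [wordAct_cons, wordAct_cons] at h
      obtain ⟨hfg, h2⟩ := hSP f g _ _ h
      subst hfg
      rcases ih v x y h2 with ⟨u, hw, hu⟩ | ⟨u, hv, hu⟩
      · exact Or.inl ⟨u, by rw [hw]; rfl, hu⟩
      · exact Or.inr ⟨u, by rw [hv]; rfl, hu⟩

theorem wordAct_inj {F U : Type*} {act : F → U → U} (hSP : IsSemiPeanoUnary act)
    (w : List F) {x y : U} (h : wordAct act w x = wordAct act w y) : x = y := by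
  induction w with
  | nil => exact h
  | cons f w ih => exact ih ((hSP f f _ _ h).2)

theorem wordAct_wpow {F U : Type*} (act : F → U → U) {ω : List F} {b : U}
    (hb : wordAct act ω b = b) (k : ℕ) : wordAct act (wpow ω k) b = b := by
  induction k with
  | zero => rw [wpow_zero]; rfl
  | succ k ih => rw [wpow_succ, wordAct_append, ih, hb]

theorem exists_omega {F U : Type*} {act : F → U → U} (hSP : IsSemiPeanoUnary act) (b : U) :
    ∃ ω : List F, wordAct act ω b = b ∧
      ∀ u, wordAct act u b = b → ∃ k, u = wpow ω k := by
  by_cases hP : ∃ u : List F, u ≠ [] ∧ wordAct act u b = b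
  · -- minimal length nonempty period
    have hP' : ∃ m : ℕ, ∃ u : List F, u.length = m ∧ u ≠ [] ∧ wordAct act u b = b := by
      obtain ⟨u, hu1, hu2⟩ := hP; exact ⟨u.length, u, rfl, hu1, hu2⟩
    classical
    obtain ⟨ω, hωlen, hωne, hωb⟩ := Nat.find_spec hP'
    have hmin : ∀ u : List F, u ≠ [] → wordAct act u b = b → ω.length ≤ u.length := by
      intro u hu1 hu2
      rw [hωlen]
      by_contra hlt
      exact Nat.find_min hP' (lt_of_not_ge hlt) ⟨u, rfl, hu1, hu2⟩
    refine ⟨ω, hωb, ?_⟩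
    suffices H : ∀ m (u : List F), u.length ≤ m → wordAct act u b = b → ∃ k, u = wpow ω k from
      fun u hu => H u.length u le_rfl hu
    intro m
    induction m with
    | zero =>
      intro u hlen _
      have : u = [] := List.length_eq_zero_iff.mp (Nat.le_zero.mp hlen)
      exact ⟨0, by rw [this, wpow_zero]⟩
    | succ m ih =>
      intro u hlen hu
      rcases eq_or_ne u [] with rfl | hne
      · exact ⟨0, (wpow_zero ω).symm⟩
      · have h := strip hSP u ω b b (by rw [hu, hωb])
        rcases h with ⟨r, hur, hr⟩ | ⟨r, hωr, hr⟩
        · -- u = ω ++ r, wordAct r b = b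
          have hrlen : r.length ≤ m := by
            have := congrArg List.length hur
            simp at this
            have hω0 : 0 < ω.length := List.length_pos_iff.mpr hωne
            omega
          obtain ⟨k, hk⟩ := ih r hrlen hr
          exact ⟨k + 1, by rw [hur, hk, wpow_succ]⟩
        · -- ω = u ++ r, wordAct r b = b
          rcases eq_or_ne r [] with rfl | hrne
          · refine ⟨1, ?_⟩
            rw [wpow_succ, wpow_zero, List.append_nil]
            rw [List.append_nil] at hωr
            exact hωr.symm
          · exfalso
            have h1 := hmin r hrne hr
            have := congrArg List.length hωr
            simp at this
            have hu0 : 0 < u.length := List.length_pos_iff.mpr hne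
            omega
  · refine ⟨[], rfl, fun u hu => ?_⟩
    refine ⟨0, ?_⟩
    rw [wpow_zero]
    by_contra hne
    exact hP ⟨u, hne, hu⟩

theorem wpow_succ' {F : Type*} (ω : List F) (k : ℕ) : wpow ω (k+1) = wpow ω k ++ ω := by
  rw [wpow_add, wpow_one]

theorem mk_eq_mk {F : Type*} (ω : List F) (w v : List F) :
    FmodW.mk ω w = FmodW.mk ω v ↔ ∃ k, w = v ++ wpow ω k ∨ v = w ++ wpow ω k := by
  constructor
  · intro h
    have h' := Quot.eq.mp h
    clear h
    induction h' with
    | rel x y hxy => exact ⟨1, Or.inr (by rw [hxy, wpow_one])⟩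
    | refl x => exact ⟨0, Or.inl (by rw [wpow_zero, List.append_nil])⟩
    | symm x y _ ih => obtain ⟨k, hk⟩ := ih; exact ⟨k, hk.symm⟩
    | trans x y z _ _ ih1 ih2 =>
      obtain ⟨k, hk⟩ := ih1
      obtain ⟨l, hl⟩ := ih2
      rcases hk with hk | hk <;> rcases hl with hl | hl
      · exact ⟨l + k, Or.inl (by rw [hk, hl, wpow_add, List.append_assoc])⟩
      · -- x = y ++ ω^k, z = y ++ ω^l
        rcases le_total l k with hle | hle
        · obtain ⟨m, rfl⟩ := Nat.exists_eq_add_of_le hle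
          refine ⟨m, Or.inl ?_⟩
          rw [hk, hl, wpow_add, List.append_assoc]
        · obtain ⟨m, rfl⟩ := Nat.exists_eq_add_of_le hle
          refine ⟨m, Or.inr ?_⟩
          rw [hk, hl, wpow_add, List.append_assoc]
      · -- y = x ++ ω^k, y = z ++ ω^l
        rcases le_total l k with hle | hle
        · obtain ⟨m, rfl⟩ := Nat.exists_eq_add_of_le hle
          refine ⟨m, Or.inr ?_⟩
          have : z ++ wpow ω l = (x ++ wpow ω m) ++ wpow ω l := by
            rw [← hl, hk, Nat.add_comm, wpow_add, List.append_assoc]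
          exact List.append_cancel_right this
        · obtain ⟨m, rfl⟩ := Nat.exists_eq_add_of_le hle
          refine ⟨m, Or.inl ?_⟩
          have : x ++ wpow ω k = (z ++ wpow ω m) ++ wpow ω k := by
            rw [← hk, hl, Nat.add_comm, wpow_add, List.append_assoc]
          exact List.append_cancel_right this
      · exact ⟨k + l, Or.inr (by rw [hl, hk, wpow_add, List.append_assoc])⟩
  · intro ⟨k, hk⟩
    have key : ∀ (u : List F) (k : ℕ), FmodW.mk ω (u ++ wpow ω k) = FmodW.mk ω u := by
      intro u k
      induction k with
      | zero => rw [wpow_zero, List.append_nil]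
      | succ k ih =>
        rw [wpow_succ', ← List.append_assoc]
        calc FmodW.mk ω ((u ++ wpow ω k) ++ ω) = FmodW.mk ω (u ++ wpow ω k) :=
              (Quot.sound (show wstep ω _ _ from rfl)).symm
          _ = FmodW.mk ω u := ih
    rcases hk with hk | hk
    · rw [hk, key]
    · rw [hk, key]

theorem wordAct_mem {F U : Type*} (act : F → U → U) {S : Set U}
    (hS : ∀ f, ∀ x ∈ S, act f x ∈ S) (u : List F) {x : U} (hx : x ∈ S) :
    wordAct act u x ∈ S := by
  induction u with
  | nil => exact hx
  | cons f u ih => exact hS f _ ih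

theorem covered {F U : Type*} {act : F → U → U} {A : Set U} (hgen : Generates act A)
    (x : U) : ∃ b ∈ A, ∃ w : List F, x = wordAct act w b := by
  have h := hgen {y | ∃ b ∈ A, ∃ w : List F, y = wordAct act w b}
    (fun b hb => ⟨b, hb, [], rfl⟩)
    (fun f y ⟨b, hb, w, hw⟩ => ⟨b, hb, f :: w, by rw [hw]; rfl⟩)
  have : x ∈ Set.univ := Set.mem_univ x
  rw [← h] at this
  exact this

theorem gen_not_reachable {F U : Type*} {act : F → U → U} {A : Set U}
    (hgen : Generates act A) (hmin : ∀ B ⊆ A, Generates act B → B = A)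
    {b c : U} (hb : b ∈ A) (hc : c ∈ A) (hne : b ≠ c) (u : List F) :
    wordAct act u b ≠ c := by
  intro h
  have hA' : Generates act (A \ {c}) := by
    intro S hsub hcl
    refine hgen S ?_ hcl
    intro a ha
    rcases eq_or_ne a c with rfl | hac
    · rw [← h]
      exact wordAct_mem act hcl u (hsub ⟨hb, hne⟩)
    · exact hsub ⟨ha, hac⟩
  have := hmin (A \ {c}) Set.diff_subset hA'
  have : c ∈ A \ {c} := this.symm ▸ hc
  exact this.2 rfl

theorem A_finite {F U : Type*} {act : F → U → U} {A : Set U}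
    (hgen : Generates act A) (hmin : ∀ B ⊆ A, Generates act B → B = A)
    {X : Type} (hX : Finite X) (π : List F × X → U)
    (hsurj : Function.Surjective π) (hhom : ∀ f w, π (freeAct X f w) = act f (π w)) :
    A.Finite := by
  classical
  have hπ : ∀ (w : List F) (x : X), π (w, x) = wordAct act w (π ([], x)) := by
    intro w x
    induction w with
    | nil => rfl
    | cons f w ih =>
      have : ((f :: w, x) : List F × X) = freeAct X f (w, x) := rfl
      rw [this, hhom, ih]; rfl
  -- choose for each x a generator b x with π ([],x) reachable from b x
  have hch : ∀ x : X, ∃ b ∈ A, ∃ v : List F, π ([], x) = wordAct act v b :=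
    fun x => covered hgen (π ([], x))
  choose b hbA v hv using hch
  have hsub : A ⊆ Set.range b := by
    intro a ha
    obtain ⟨⟨w, x⟩, hwx⟩ := hsurj a
    have : a = wordAct act (w ++ v x) (b x) := by
      rw [wordAct_append, ← hv x, ← hπ, hwx]
    rcases eq_or_ne (b x) a with he | hne
    · exact ⟨x, he⟩
    · exact absurd this.symm (gen_not_reachable hgen hmin (hbA x) ha hne _)
  exact (Set.finite_range b).subset hsub

theorem existence_part {F U : Type*} {act : F → U → U} (hSP : IsSemiPeanoUnary act)
    {A : Set U} (hgen : Generates act A) (hmin : ∀ B ⊆ A, Generates act B → B = A)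
    (hfin : A.Finite) {n : ℕ} (hcard : Nat.card A = n) :
    ∃ (ω : Fin n → List F) (e : U ≃ Σ i, FmodW (ω i)),
      ∀ f x, e (act f x) = sigOp ω f (e x) := by
  classical
  haveI : Finite A := hfin.to_subtype
  have es : A ≃ Fin n := (Finite.equivFin A).trans (finCongr hcard)
  set a : Fin n → U := fun i => (es.symm i : U) with ha_def
  have haA : ∀ i, a i ∈ A := fun i => (es.symm i).2
  have hainj : Function.Injective a := by
    intro i j h
    have := Subtype.ext (p := fun x => x ∈ A) h
    exact es.symm.injective this
  choose ω hω1 hω2 using fun i => exists_omega (act := act) hSP (a i)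
  -- the evaluation map
  have sound : ∀ (i : Fin n) (φ ψ : List F), wstep (ω i) φ ψ →
      wordAct act φ (a i) = wordAct act ψ (a i) := by
    intro i φ ψ h
    rw [h, wordAct_append, hω1 i]
  set Φ : (Σ i, FmodW (ω i)) → U :=
    fun p => Quot.lift (fun w => wordAct act w (a p.1)) (sound p.1) p.2 with hΦ_def
  have hΦmk : ∀ (i : Fin n) (w : List F), Φ ⟨i, FmodW.mk (ω i) w⟩ = wordAct act w (a i) :=
    fun i w => rfl
  have hΦop : ∀ (f : F) (p : Σ i, FmodW (ω i)), Φ (sigOp ω f p) = act f (Φ p) := by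
    rintro f ⟨i, q⟩
    induction q using Quot.ind with
    | _ w => rfl
  have hinj : Function.Injective Φ := by
    rintro ⟨i, qi⟩ ⟨j, qj⟩ h
    induction qi using Quot.ind with
    | _ w =>
    induction qj using Quot.ind with
    | _ v =>
    replace h : wordAct act w (a i) = wordAct act v (a j) := h
    have hij : i = j := by
      by_contra hne
      have hane : a i ≠ a j := fun he => hne (hainj he)
      rcases strip hSP w v (a i) (a j) h with ⟨u, _, hu⟩ | ⟨u, _, hu⟩
      · exact gen_not_reachable hgen hmin (haA i) (haA j) hane u hu
      · exact gen_not_reachable hgen hmin (haA j) (haA i) hane.symm u hu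
    subst hij
    have h2 : FmodW.mk (ω i) w = FmodW.mk (ω i) v := by
      rcases strip hSP w v (a i) (a i) h with ⟨u, hwv, hu⟩ | ⟨u, hvw, hu⟩
      · obtain ⟨k, rfl⟩ := hω2 i u hu
        exact (mk_eq_mk _ _ _).mpr ⟨k, Or.inl hwv⟩
      · obtain ⟨k, rfl⟩ := hω2 i u hu
        exact (mk_eq_mk _ _ _).mpr ⟨k, Or.inr hvw⟩
    exact congrArg (fun q => (⟨i, q⟩ : Σ i, FmodW (ω i))) h2
  have hsurjΦ : Function.Surjective Φ := by
    intro x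
    obtain ⟨b, hb, w, hw⟩ := covered hgen x
    refine ⟨⟨es ⟨b, hb⟩, FmodW.mk _ w⟩, ?_⟩
    rw [hΦmk, hw]
    congr 1
    show (es.symm (es ⟨b, hb⟩) : U) = b
    rw [es.symm_apply_apply]
  set E0 : U ≃ Σ i, FmodW (ω i) := (Equiv.ofBijective Φ ⟨hinj, hsurjΦ⟩).symm with hE0
  refine ⟨ω, E0, fun f x => ?_⟩
  rw [hE0, Equiv.symm_apply_eq]
  show act f x = Φ (sigOp ω f (E0 x))
  rw [hΦop]
  congr 1
  have : Φ (E0 x) = (Equiv.ofBijective Φ ⟨hinj, hsurjΦ⟩) (E0 x) := rfl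
  rw [this, hE0, Equiv.apply_symm_apply]

theorem mk_nil_eq_mk_omega {F : Type*} (ω : List F) :
    FmodW.mk ω [] = FmodW.mk ω ω :=
  Quot.sound (show ω = [] ++ ω from (List.nil_append ω).symm)

theorem equivariant_form {F : Type*} {n : ℕ} (ω ω' : Fin n → List F)
    (E : (Σ i, FmodW (ω i)) ≃ (Σ i, FmodW (ω' i)))
    (hE : ∀ f y, E (sigOp ω f y) = sigOp ω' f (E y)) (i : Fin n) :
    ∃ (j : Fin n) (φ : List F), ∀ u, E ⟨i, FmodW.mk (ω i) u⟩ = ⟨j, FmodW.mk (ω' j) (u ++ φ)⟩ := by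
  rcases h0 : E ⟨i, FmodW.mk (ω i) []⟩ with ⟨j, q⟩
  obtain ⟨φ, hφ⟩ := Quot.exists_rep q
  refine ⟨j, φ, fun u => ?_⟩
  induction u with
  | nil => rw [h0, ← hφ]; rfl
  | cons f u ih =>
    have h1 : (⟨i, FmodW.mk (ω i) (f :: u)⟩ : Σ i, FmodW (ω i)) =
        sigOp ω f ⟨i, FmodW.mk (ω i) u⟩ := rfl
    rw [h1, hE, ih]
    rfl

theorem symm_equivariant {F : Type*} {n : ℕ} (ω ω' : Fin n → List F)
    (E : (Σ i, FmodW (ω i)) ≃ (Σ i, FmodW (ω' i)))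
    (hE : ∀ f y, E (sigOp ω f y) = sigOp ω' f (E y)) :
    ∀ f y, E.symm (sigOp ω' f y) = sigOp ω f (E.symm y) := by
  intro f y
  apply E.injective
  rw [Equiv.apply_symm_apply, hE, Equiv.apply_symm_apply]

theorem conj_cases {F : Type*} {ω ω' φ ψ : List F}
    (h1 : ∃ k, φ = (ω ++ φ) ++ wpow ω' k ∨ ω ++ φ = φ ++ wpow ω' k)
    (h2 : ∃ l, ψ = (ω' ++ ψ) ++ wpow ω l ∨ ω' ++ ψ = ψ ++ wpow ω l) :
    ∃ χ : List F, ω ++ χ = χ ++ ω' := by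
  have nilnil : ω = [] → ω' = [] → ∃ χ : List F, ω ++ χ = χ ++ ω' := by
    rintro rfl rfl; exact ⟨[], rfl⟩
  obtain ⟨k, h1⟩ := h1
  obtain ⟨l, h2⟩ := h2
  rcases h1 with h1 | h1
  · -- ω = []
    have hω : ω = [] := by
      have := congrArg List.length h1
      simp [wpow_length] at this
      exact List.length_eq_zero_iff.mp (by omega)
    have hω' : ω' = [] := by
      rcases h2 with h2 | h2
      · have := congrArg List.length h2
        simp [wpow_length] at this
        exact List.length_eq_zero_iff.mp (by omega)
      · subst hω
        have := congrArg List.length h2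
        rw [List.length_append, List.length_append, wpow_length, List.length_nil] at this
        exact List.length_eq_zero_iff.mp (by omega)
    exact nilnil hω hω'
  · have hlen1 : ω.length = k * ω'.length := by
      have := congrArg List.length h1
      simp [wpow_length] at this
      omega
    rcases h2 with h2 | h2
    · have hω' : ω' = [] := by
        have := congrArg List.length h2
        simp [wpow_length] at this
        exact List.length_eq_zero_iff.mp (by omega)
      have hω : ω = [] := by
        apply List.length_eq_zero_iff.mp
        rw [hlen1, hω']
        simp
      exact nilnil hω hω'
    · have hlen2 : ω'.length = l * ω.length := by
        have := congrArg List.length h2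
        simp [wpow_length] at this
        omega
      rcases Nat.eq_zero_or_pos ω.length with h0 | h0
      · have hω : ω = [] := List.length_eq_zero_iff.mp h0
        have hω' : ω' = [] := List.length_eq_zero_iff.mp (by rw [hlen2, h0]; simp)
        exact nilnil hω hω'
      · have hkl : k * l = 1 := by
          have h3 : (k * l) * ω.length = 1 * ω.length := by
            rw [one_mul, mul_assoc, ← hlen2, ← hlen1]
          exact Nat.eq_of_mul_eq_mul_right h0 h3
        have hk1 : k = 1 := Nat.eq_one_of_mul_eq_one_right hkl
        refine ⟨φ, ?_⟩
        rw [h1, hk1, wpow_one]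

theorem uniqueness_part {F U : Type*} {act : F → U → U} {n : ℕ}
    (ω ω' : Fin n → List F)
    (e : U ≃ Σ i, FmodW (ω i)) (e' : U ≃ Σ i, FmodW (ω' i))
    (he : ∀ f x, e (act f x) = sigOp ω f (e x))
    (he' : ∀ f x, e' (act f x) = sigOp ω' f (e' x)) :
    ∃ σ : Equiv.Perm (Fin n), ∀ i,
      ∃ φ : List F, ω i ++ φ = φ ++ ω' (σ i) := by
  classical
  set E : (Σ i, FmodW (ω i)) ≃ (Σ i, FmodW (ω' i)) := e.symm.trans e' with hE_def
  have hE : ∀ f y, E (sigOp ω f y) = sigOp ω' f (E y) := by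
    intro f y
    show e' (e.symm (sigOp ω f y)) = sigOp ω' f (e' (e.symm y))
    rw [← he']
    congr 1
    apply e.injective
    rw [he, Equiv.apply_symm_apply, Equiv.apply_symm_apply]
  have hE' : ∀ f y, E.symm (sigOp ω' f y) = sigOp ω f (E.symm y) :=
    symm_equivariant ω ω' E hE
  choose j φf hEf using equivariant_form ω ω' E hE
  choose j' ψf hEf' using equivariant_form ω' ω E.symm hE'
  have hji : ∀ i, j' (j i) = i := by
    intro i
    have h1 : E.symm ⟨j i, FmodW.mk (ω' (j i)) (φf i)⟩ = ⟨i, FmodW.mk (ω i) []⟩ := by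
      rw [Equiv.symm_apply_eq, hEf i []]
      rfl
    have h2 := hEf' (j i) (φf i)
    rw [h1] at h2
    exact (congrArg Sigma.fst h2).symm
  have hij : ∀ i0, j (j' i0) = i0 := by
    intro i0
    have h1 : E ⟨j' i0, FmodW.mk (ω (j' i0)) (ψf i0)⟩ = ⟨i0, FmodW.mk (ω' i0) []⟩ := by
      apply E.symm.injective
      rw [Equiv.symm_apply_apply, hEf' i0 []]
      rfl
    have h2 := hEf (j' i0) (ψf i0)
    rw [h1] at h2
    exact (congrArg Sigma.fst h2).symm
  refine ⟨⟨j, j', hji, hij⟩, fun i => ?_⟩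
  show ∃ φ : List F, ω i ++ φ = φ ++ ω' (j i)
  -- first relation: in FmodW (ω' (j i))
  have key1 : FmodW.mk (ω' (j i)) (φf i) = FmodW.mk (ω' (j i)) (ω i ++ φf i) := by
    have h := congrArg E
      (congrArg (fun q => (⟨i, q⟩ : Σ i, FmodW (ω i))) (mk_nil_eq_mk_omega (ω i)))
    rw [hEf i [], hEf i (ω i)] at h
    have h2 := (Sigma.mk.inj_iff.mp h).2
    exact eq_of_heq h2
  -- second relation: in FmodW (ω i)
  have key2 : FmodW.mk (ω i) (ψf (j i)) = FmodW.mk (ω i) (ω' (j i) ++ ψf (j i)) := by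
    have h := congrArg E.symm
      (congrArg (fun q => (⟨j i, q⟩ : Σ i, FmodW (ω' i))) (mk_nil_eq_mk_omega (ω' (j i))))
    rw [hEf' (j i) [], hEf' (j i) (ω' (j i))] at h
    have h2 : FmodW.mk (ω (j' (j i))) ([] ++ ψf (j i))
        = FmodW.mk (ω (j' (j i))) (ω' (j i) ++ ψf (j i)) := eq_of_heq (Sigma.mk.inj_iff.mp h).2
    rw [hji i] at h2
    exact h2
  exact conj_cases ((mk_eq_mk _ _ _).mp key1) ((mk_eq_mk _ _ _).mp key2)

/-- Every finitely presented unary semi-Peano algebra of rank `n` is isomorphic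
to a free product `F/ω₁ ∐ ⋯ ∐ F/ωₙ` of `n` cyclic algebras, and the
decomposition is unique up to reordering the factors and conjugation of the
words. -/
theorem finPresented_semiPeano_decomposition
    {F : Type*} {U : Type*} (act : F → U → U)
    (hSP : IsSemiPeanoUnary act) (hfp : IsFinPresented act)
    (n : ℕ) (A : Set U) (hgen : Generates act A)
    (hmin : ∀ B ⊆ A, Generates act B → B = A)
    (hcard : Nat.card A = n) :
    (∃ (ω : Fin n → List F) (e : U ≃ Σ i, FmodW (ω i)),
        ∀ f x, e (act f x) = sigOp ω f (e x)) ∧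
    (∀ (ω ω' : Fin n → List F)
        (e : U ≃ Σ i, FmodW (ω i)) (e' : U ≃ Σ i, FmodW (ω' i)),
        (∀ f x, e (act f x) = sigOp ω f (e x)) →
        (∀ f x, e' (act f x) = sigOp ω' f (e' x)) →
        ∃ σ : Equiv.Perm (Fin n), ∀ i,
          ∃ φ : List F, ω i ++ φ = φ ++ ω' (σ i)) := by
  obtain ⟨X, hX, R, hR, π, hsurj, hhom, hker⟩ := hfp
  have hfin : A.Finite := A_finite hgen hmin hX π hsurj hhom
  constructor
  · exact existence_part hSP hgen hmin hfin hcard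
  · exact fun ω ω' e e' he he' => uniqueness_part ω ω' e e' he he'
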